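/- arXiv:1503.08355 — 3 statements merged into one kernel-verified Lean document; each statement's English description precedes it below -/
import Mathlib

section
/- Let n ≥ 1 and λ = Σ_{i=1}^n m_i ω_i with all m_i nonnegative integers. Suppose E(λ) = -Σ i·m_i is odd and less than -1, and μ(λ) = -½Σ_{i<n} i·m_i + (1 - n/2)m_n + ½ ≥ 0. Then exactly one of the following holds: n = 1 and λ = a·ω_1 with a > 1 odd; n = 2 and λ = ω_1 + a·ω_2 with a ≥ 1; or n = 3 and λ = ω_3. -/
open Finset

/-- Classification for type `Cₙ` (Siegel domain `IIIₙ`): if `E(λ) = -Σ i·mᵢ` is odd and `< -1`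
and `μ(λ) = -½Σ_{i<n} i·mᵢ + (1 - n/2)mₙ + ½ ≥ 0`, then `n = 1` and `λ = a·ω₁` (`a > 1` odd),
or `n = 2` and `λ = ω₁ + a·ω₂` (`a ≥ 1`), or `n = 3` and `λ = ω₃`. -/
theorem stmt5 (n : ℕ) (hn : 1 ≤ n) (m : Fin n → ℕ)
    (hodd : Odd (∑ i : Fin n, ((i : ℕ) + 1) * m i))
    (hgt : 1 < ∑ i : Fin n, ((i : ℕ) + 1) * m i)
    (hmu : 0 ≤ -(1 / 2 : ℚ) *
          (∑ i : Fin n, if (i : ℕ) + 1 < n then (((i : ℕ) : ℚ) + 1) * (m i : ℚ) else 0)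
        + (1 - (n : ℚ) / 2) * (m ⟨n - 1, by omega⟩ : ℚ) + 1 / 2) :
    (n = 1 ∧ ∃ a : ℕ, 1 < a ∧ Odd a ∧ ∀ i : Fin n, m i = a) ∨
    (n = 2 ∧ ∃ a : ℕ, 1 ≤ a ∧ ∀ i : Fin n, m i = if (i : ℕ) = 0 then 1 else a) ∨
    (n = 3 ∧ ∀ i : Fin n, m i = if (i : ℕ) = 2 then 1 else 0) := by
  set L : Fin n := ⟨n - 1, by omega⟩ with hL
  set S : ℕ := ∑ i : Fin n, if (i : ℕ) + 1 < n then ((i : ℕ) + 1) * m i else 0 with hS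
  have hcast : (∑ i : Fin n, if (i : ℕ) + 1 < n then (((i : ℕ) : ℚ) + 1) * (m i : ℚ) else 0)
      = (S : ℚ) := by
    rw [hS, Nat.cast_sum]
    refine Finset.sum_congr rfl fun i _ => ?_
    split <;> push_cast <;> ring
  rw [hcast] at hmu
  have hTsplit : (∑ i : Fin n, ((i : ℕ) + 1) * m i) = S + n * m L := by
    have h1 : (∑ i : Fin n, ((i : ℕ) + 1) * m i)
        = ∑ i : Fin n, ((if (i : ℕ) + 1 < n then ((i : ℕ) + 1) * m i else 0)
          + (if (i : ℕ) + 1 < n then 0 else ((i : ℕ) + 1) * m i)) := by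
      refine Finset.sum_congr rfl fun i _ => ?_
      split <;> simp
    rw [h1, Finset.sum_add_distrib]
    congr 1
    rw [Finset.sum_eq_single L]
    · have h2 : (L : ℕ) + 1 = n := by simp [hL]; omega
      rw [if_neg (by omega), h2]
    · intro i _ hne
      have hlt : (i : ℕ) + 1 < n := by
        have := i.isLt
        rcases Nat.lt_or_ge ((i : ℕ) + 1) n with h | h
        · exact h
        · exfalso; apply hne; apply Fin.ext; simp [hL]; omega
      simp [hlt]
    · intro h; exact absurd (Finset.mem_univ L) h
  clear_value L S
  obtain ⟨k, hk⟩ := hodd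
  rw [hTsplit] at hk hgt
  rcases Nat.lt_or_ge n 2 with h2 | h2
  · -- n = 1
    have hn1 : n = 1 := by omega
    subst hn1
    left
    have hS0 : S = 0 := by
      rw [hS]
      refine Finset.sum_eq_zero fun i _ => ?_
      rw [if_neg (by omega)]
    refine ⟨rfl, m L, by omega, ⟨k, by omega⟩, ?_⟩
    · intro i
      exact congrArg m (Subsingleton.elim i L)
  · have hq2 : ((S + (n - 2) * m L : ℕ) : ℚ) ≤ 1 := by
      push_cast [Nat.cast_sub h2]
      linarith
    have hkey : S + (n - 2) * m L ≤ 1 := by exact_mod_cast hq2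
    rcases Nat.lt_or_ge n 4 with h4 | h4
    · rcases Nat.lt_or_ge n 3 with h3 | h3
      · -- n = 2
        have hn2 : n = 2 := by omega
        subst hn2
        right; left
        have hLeq : L = (1 : Fin 2) := by apply Fin.ext; simp [hL]
        have hSval : S = m 0 := by
          rw [hS, Fin.sum_univ_two]
          norm_num
        rw [hLeq] at hk hgt
        have hm0 : m 0 = 1 := by omega
        refine ⟨rfl, m 1, by omega, ?_⟩
        intro i
        fin_cases i <;> simp [hm0]
      · -- n = 3
        have hn3 : n = 3 := by omega
        subst hn3
        right; right
        have hLeq : L = (2 : Fin 3) := by apply Fin.ext; simp [hL]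
        have hSval : S = m 0 + 2 * m 1 := by
          rw [hS, Fin.sum_univ_three]
          norm_num
        rw [hLeq] at hk hgt hkey
        refine ⟨rfl, ?_⟩
        have hm2 : m 2 = 1 ∧ m 0 = 0 ∧ m 1 = 0 := by omega
        intro i
        fin_cases i <;> simp [hm2.1, hm2.2.1, hm2.2.2]
    · -- n ≥ 4
      exfalso
      have hm0 : m L = 0 := by
        by_contra h
        have h1 : 1 ≤ m L := Nat.one_le_iff_ne_zero.mpr h
        have : n - 2 ≤ (n - 2) * m L := Nat.le_mul_of_pos_right _ (by omega)
        omega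
      rw [hm0, Nat.mul_zero] at hk hkey hgt
      omega
end

section
/- Let p ≥ 2 and m_1,…,m_{2p-1} nonnegative integers. Set E(λ) = -Σ_{i=1}^p i·m_i - Σ_{i=p+1}^{2p-1}(2p-i)m_i and μ(λ) = -½Σ_{i<p} i·m_i - (p/2 - 1)m_p - Σ_{i>p}(p - i/2)m_i + ½. If -E(λ) is odd and greater than 1 and μ(λ) ≥ 0, then either p = 2 and λ = ω_1 + a·ω_2 or ω_3 + a·ω_2 for some a ≥ 1, or p = 3 and λ = ω_3. In particular, for p > 3 there are no solutions. -/
open Finset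

/-- Classification for the tube domain `I_{p,p}` (type `A₂ₚ₋₁`, distinguished root `σₚ`):
if `-E(λ) = Σ_{i≤p} i·mᵢ + Σ_{i>p}(2p-i)mᵢ` is odd and `> 1` and
`μ(λ) = -½Σ_{i<p} i·mᵢ - (p/2-1)mₚ - Σ_{i>p}(p-i/2)mᵢ + ½ ≥ 0`, then `p = 2` and
`λ = ω₁ + aω₂` or `ω₃ + aω₂` (`a ≥ 1`), or `p = 3` and `λ = ω₃`. In particular there
are no solutions for `p > 3`. -/
theorem stmt14 (p : ℕ) (hp : 2 ≤ p) (m : Fin (2 * p - 1) → ℕ)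
    (hodd : Odd (∑ i : Fin (2 * p - 1),
      if (i : ℕ) < p then ((i : ℕ) + 1) * m i else (2 * p - ((i : ℕ) + 1)) * m i))
    (hgt : 1 < ∑ i : Fin (2 * p - 1),
      if (i : ℕ) < p then ((i : ℕ) + 1) * m i else (2 * p - ((i : ℕ) + 1)) * m i)
    (hmu : 0 ≤ -(1 / 2 : ℚ) * (∑ i : Fin (2 * p - 1),
          if (i : ℕ) + 1 < p then (((i : ℕ) : ℚ) + 1) * (m i : ℚ) else 0)
        - ((p : ℚ) / 2 - 1) * (m ⟨p - 1, by omega⟩ : ℚ)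
        - (∑ i : Fin (2 * p - 1),
          if p < (i : ℕ) + 1 then ((p : ℚ) - (((i : ℕ) : ℚ) + 1) / 2) * (m i : ℚ) else 0)
        + 1 / 2) :
    (p = 2 ∧ ∃ a : ℕ, 1 ≤ a ∧
      ((∀ i : Fin (2 * p - 1), m i = if (i : ℕ) = 0 then 1 else if (i : ℕ) = 1 then a else 0) ∨
       (∀ i : Fin (2 * p - 1), m i = if (i : ℕ) = 2 then 1 else if (i : ℕ) = 1 then a else 0))) ∨
    (p = 3 ∧ ∀ i : Fin (2 * p - 1), m i = if (i : ℕ) = 2 then 1 else 0) := by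
  have hplt : p - 1 < 2 * p - 1 := by omega
  obtain ⟨A, hA⟩ : ∃ A : ℕ,
      A = ∑ i : Fin (2 * p - 1), if (i : ℕ) + 1 < p then ((i : ℕ) + 1) * m i else 0 := ⟨_, rfl⟩
  obtain ⟨B, hB⟩ : ∃ B : ℕ,
      B = ∑ i : Fin (2 * p - 1),
        if p < (i : ℕ) + 1 then (2 * p - ((i : ℕ) + 1)) * m i else 0 := ⟨_, rfl⟩
  -- decompose the E-sum
  have hmid : (∑ i : Fin (2 * p - 1), if (i : ℕ) = p - 1 then p * m i else 0)
      = p * m ⟨p - 1, hplt⟩ := by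
    rw [Finset.sum_eq_single_of_mem (⟨p - 1, hplt⟩ : Fin (2 * p - 1)) (Finset.mem_univ _)
      (fun b _ hb => if_neg (fun hcon => hb (Fin.ext hcon)))]
    rw [if_pos rfl]
  have hE : (∑ i : Fin (2 * p - 1),
        if (i : ℕ) < p then ((i : ℕ) + 1) * m i else (2 * p - ((i : ℕ) + 1)) * m i)
      = A + p * m ⟨p - 1, hplt⟩ + B := by
    rw [hA, hB, ← hmid, ← Finset.sum_add_distrib, ← Finset.sum_add_distrib]
    refine Finset.sum_congr rfl fun i _ => ?_
    have hi : (i : ℕ) < 2 * p - 1 := i.isLt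
    rcases lt_trichotomy ((i : ℕ) + 1) p with h | h | h
    · rw [if_pos (by omega : (i : ℕ) < p), if_pos h, if_neg (by omega : ¬(i : ℕ) = p - 1),
        if_neg (by omega : ¬p < (i : ℕ) + 1)]
      ring
    · rw [if_pos (by omega : (i : ℕ) < p), if_neg (by omega : ¬(i : ℕ) + 1 < p),
        if_pos (by omega : (i : ℕ) = p - 1), if_neg (by omega : ¬p < (i : ℕ) + 1), h]
      ring
    · rw [if_neg (by omega : ¬(i : ℕ) < p), if_neg (by omega : ¬(i : ℕ) + 1 < p),
        if_neg (by omega : ¬(i : ℕ) = p - 1), if_pos h]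
      ring
  rw [hE] at hodd hgt
  -- convert the μ-inequality to a natural-number inequality
  have hSA : (∑ i : Fin (2 * p - 1),
      if (i : ℕ) + 1 < p then (((i : ℕ) : ℚ) + 1) * (m i : ℚ) else 0) = (A : ℚ) := by
    rw [hA, Nat.cast_sum]
    refine Finset.sum_congr rfl fun i _ => ?_
    by_cases h : (i : ℕ) + 1 < p
    · rw [if_pos h, if_pos h]; push_cast; ring
    · rw [if_neg h, if_neg h]; norm_num
  have hSB : (∑ i : Fin (2 * p - 1),
      if p < (i : ℕ) + 1 then ((p : ℚ) - (((i : ℕ) : ℚ) + 1) / 2) * (m i : ℚ) else 0)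
      = (B : ℚ) / 2 := by
    rw [hB, Nat.cast_sum, Finset.sum_div]
    refine Finset.sum_congr rfl fun i _ => ?_
    have hi : (i : ℕ) < 2 * p - 1 := i.isLt
    by_cases h : p < (i : ℕ) + 1
    · rw [if_pos h, if_pos h, Nat.cast_mul, Nat.cast_sub (by omega : (i : ℕ) + 1 ≤ 2 * p)]
      push_cast
      ring
    · rw [if_neg h, if_neg h]; norm_num
  rw [hSA, hSB] at hmu
  have hS : A + (p - 2) * m ⟨p - 1, hplt⟩ + B ≤ 1 := by
    have h1 : ((A + (p - 2) * m ⟨p - 1, hplt⟩ + B : ℕ) : ℚ) ≤ 1 := by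
      push_cast [Nat.cast_sub hp]
      linarith [hmu]
    exact_mod_cast h1
  -- mₚ ≥ 1
  have hx1 : 1 ≤ m ⟨p - 1, hplt⟩ := by
    by_contra hcon
    have h0 : m ⟨p - 1, hplt⟩ = 0 := by omega
    rw [h0, Nat.mul_zero] at hS hgt
    omega
  -- p ≤ 3
  have hple : p ≤ 3 := by
    by_contra hcon
    push_neg at hcon
    have h2 : 2 * 1 ≤ (p - 2) * m ⟨p - 1, hplt⟩ := Nat.mul_le_mul (by omega) hx1
    linarith [hS, h2]
  interval_cases p
  · -- p = 2
    have h0' : (0 : ℕ) < 2 * 2 - 1 := by omega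
    have h1' : (1 : ℕ) < 2 * 2 - 1 := by omega
    have h2' : (2 : ℕ) < 2 * 2 - 1 := by omega
    have hA2 : A = m ⟨0, h0'⟩ := by
      rw [hA, Finset.sum_eq_single_of_mem (⟨0, h0'⟩ : Fin (2 * 2 - 1)) (Finset.mem_univ _)
        (fun b _ hb => by
          rw [if_neg]
          intro hcon
          exact hb (Fin.ext (by omega : (b : ℕ) = 0)))]
      norm_num
    have hB2 : B = m ⟨2, h2'⟩ := by
      rw [hB, Finset.sum_eq_single_of_mem (⟨2, h2'⟩ : Fin (2 * 2 - 1)) (Finset.mem_univ _)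
        (fun b _ hb => by
          have hbv : (b : ℕ) < 2 * 2 - 1 := b.isLt
          rw [if_neg]
          intro hcon
          exact hb (Fin.ext (by omega : (b : ℕ) = 2)))]
      norm_num
    obtain ⟨k, hk⟩ := hodd
    have e1 : m ⟨2 - 1, hplt⟩ = m ⟨1, h1'⟩ := rfl
    rw [hA2, hB2, e1] at hS hgt hk
    have hm1 : 1 ≤ m ⟨1, h1'⟩ := by omega
    left
    refine ⟨rfl, m ⟨1, h1'⟩, hm1, ?_⟩
    have hcases : (m ⟨0, h0'⟩ = 1 ∧ m ⟨2, h2'⟩ = 0) ∨ (m ⟨0, h0'⟩ = 0 ∧ m ⟨2, h2'⟩ = 1) := by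
      omega
    rcases hcases with ⟨e0, e2⟩ | ⟨e0, e2⟩
    · left
      intro i
      rcases i with ⟨v, hv⟩
      have hv3 : v < 3 := by omega
      interval_cases v
      · simpa using e0
      · norm_num
      · simpa using e2
    · right
      intro i
      rcases i with ⟨v, hv⟩
      have hv3 : v < 3 := by omega
      interval_cases v
      · simpa using e0
      · norm_num
      · simpa using e2
  · -- p = 3
    have h3 : A = 0 ∧ B = 0 ∧ m ⟨3 - 1, hplt⟩ = 1 := by omega
    obtain ⟨hAz, hBz, hmp⟩ := h3
    rw [hA] at hAz
    rw [hB] at hBz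
    have hA0 := Finset.sum_eq_zero_iff.mp hAz
    have hB0 := Finset.sum_eq_zero_iff.mp hBz
    right
    refine ⟨rfl, fun i => ?_⟩
    have hai := hA0 i (Finset.mem_univ i)
    have hbi := hB0 i (Finset.mem_univ i)
    have hi : (i : ℕ) < 2 * 3 - 1 := i.isLt
    rcases lt_trichotomy ((i : ℕ) + 1) 3 with h | h | h
    · rw [if_pos h] at hai
      rw [if_neg (by omega : ¬(i : ℕ) = 2)]
      rcases Nat.mul_eq_zero.mp hai with h' | h'
      · omega
      · exact h'
    · rw [if_pos (by omega : (i : ℕ) = 2)]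
      have hieq : i = ⟨3 - 1, hplt⟩ := Fin.ext (by omega : (i : ℕ) = 3 - 1)
      rw [hieq]
      exact hmp
    · rw [if_pos h] at hbi
      rw [if_neg (by omega : ¬(i : ℕ) = 2)]
      rcases Nat.mul_eq_zero.mp hbi with h' | h'
      · omega
      · exact h'
end

section
/- Let n ≥ 4 and m_1,…,m_n nonnegative integers with λ = Σ m_i ω_i in type D_n with distinguished root σ_1, where E(λ) = -2(m_1 + ⋯ + m_{n-2}) - (m_{n-1} + m_n) and μ(λ) = ½ - m_2 - ⋯ - m_{n-2} - ½m_{n-1} - ½m_n. If -E(λ) is odd and greater than 1 and μ(λ) ≥ 0, then λ = a·ω_1 + ω_{n-1} or λ = a·ω_1 + ω_n for some integer a > 0. -/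
open Finset

/-- Classification for the domain `IV₂ₙ₋₂` (type `Dₙ`, distinguished root `σ₁`):
with `E(λ) = -2(m₁ + ⋯ + mₙ₋₂) - (mₙ₋₁ + mₙ)` and
`μ(λ) = ½ - m₂ - ⋯ - mₙ₋₂ - ½mₙ₋₁ - ½mₙ`, if `-E(λ)` is odd and `> 1` and `μ(λ) ≥ 0`,
then `λ = a·ω₁ + ωₙ₋₁` or `λ = a·ω₁ + ωₙ` for some `a > 0`. -/
theorem stmt18 (n : ℕ) (hn : 4 ≤ n) (m : Fin n → ℕ)
    (hodd : Odd (2 * (∑ i : Fin n, if (i : ℕ) + 2 < n then m i else 0)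
      + (m ⟨n - 2, by omega⟩ + m ⟨n - 1, by omega⟩)))
    (hgt : 1 < 2 * (∑ i : Fin n, if (i : ℕ) + 2 < n then m i else 0)
      + (m ⟨n - 2, by omega⟩ + m ⟨n - 1, by omega⟩))
    (hmu : 0 ≤ (1 / 2 : ℚ)
        - (∑ i : Fin n, if 1 ≤ (i : ℕ) ∧ (i : ℕ) + 2 < n then (m i : ℚ) else 0)
        - (1 / 2) * (m ⟨n - 2, by omega⟩ : ℚ) - (1 / 2) * (m ⟨n - 1, by omega⟩ : ℚ)) :
    ∃ a : ℕ, 0 < a ∧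
      ((∀ i : Fin n, m i = if (i : ℕ) = 0 then a else if (i : ℕ) + 2 = n then 1 else 0) ∨
       (∀ i : Fin n, m i = if (i : ℕ) = 0 then a else if (i : ℕ) + 1 = n then 1 else 0)) := by
  have hi0 : (0 : ℕ) < n := by omega
  set i0 : Fin n := ⟨0, hi0⟩ with hi0def
  set S' : ℕ := ∑ i : Fin n, if 1 ≤ (i : ℕ) ∧ (i : ℕ) + 2 < n then m i else 0 with hS'
  -- split the full sum into the i = 0 term and the rest
  have hsplit : (∑ i : Fin n, if (i : ℕ) + 2 < n then m i else 0) = m i0 + S' := by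
    rw [hS']
    have : (∑ i : Fin n, if (i : ℕ) + 2 < n then m i else 0)
        = ∑ i : Fin n, ((if i = i0 then m i else 0)
            + (if 1 ≤ (i : ℕ) ∧ (i : ℕ) + 2 < n then m i else 0)) := by
      apply Finset.sum_congr rfl
      intro i _
      have hiff : i = i0 ↔ (i : ℕ) = 0 := by
        constructor
        · intro h; rw [h]
        · intro h; exact Fin.ext h
      by_cases h0 : (i : ℕ) = 0
      · simp [hiff, h0]; omega
      · simp [hiff, h0]
        split_ifs <;> omega
    rw [this, Finset.sum_add_distrib]
    congr 1
    simp
  -- turn the rational sum into a cast of the natural sum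
  have hcast : (∑ i : Fin n, if 1 ≤ (i : ℕ) ∧ (i : ℕ) + 2 < n then (m i : ℚ) else 0)
      = (S' : ℚ) := by
    rw [hS', Nat.cast_sum]
    apply Finset.sum_congr rfl
    intro i _
    split_ifs <;> simp
  rw [hcast] at hmu
  have hkey : 2 * S' + m ⟨n - 2, by omega⟩ + m ⟨n - 1, by omega⟩ ≤ 1 := by
    have h : (2 : ℚ) * (S' : ℚ) + (m ⟨n - 2, by omega⟩ : ℚ) + (m ⟨n - 1, by omega⟩ : ℚ)
        ≤ 1 := by linarith
    exact_mod_cast h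
  rw [hsplit] at hodd hgt
  obtain ⟨k, hk⟩ := hodd
  have hS0 : S' = 0 := by omega
  have hT : m ⟨n - 2, by omega⟩ + m ⟨n - 1, by omega⟩ = 1 := by omega
  have hm0 : 0 < m i0 := by omega
  have hzero : ∀ i : Fin n, 1 ≤ (i : ℕ) ∧ (i : ℕ) + 2 < n → m i = 0 := by
    intro i hi
    have := (Finset.sum_eq_zero_iff.mp hS0.symm.symm) i (Finset.mem_univ i)
    simpa [hi] using this
  refine ⟨m i0, hm0, ?_⟩
  have hval : ∀ i : Fin n, ((i : ℕ) = 0 → m i = m i0) := by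
    intro i hi
    have : i = i0 := Fin.ext hi
    rw [this]
  by_cases hcase : m ⟨n - 2, by omega⟩ = 1
  · left
    intro i
    by_cases h0 : (i : ℕ) = 0
    · simp [h0, hval i h0]
    · by_cases h2 : (i : ℕ) + 2 = n
      · have hieq : i = (⟨n - 2, by omega⟩ : Fin n) := Fin.ext (by simp; omega)
        rw [if_neg h0, if_pos h2, hieq]
        omega
      · by_cases h1 : (i : ℕ) + 1 = n
        · have hieq : i = (⟨n - 1, by omega⟩ : Fin n) := Fin.ext (by simp; omega)
          rw [if_neg h0, if_neg h2, hieq]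
          omega
        · have hi : 1 ≤ (i : ℕ) ∧ (i : ℕ) + 2 < n := by
            have := i.isLt; omega
          simp [h0, h2, hzero i hi]
  · right
    intro i
    by_cases h0 : (i : ℕ) = 0
    · simp [h0, hval i h0]
    · by_cases h1 : (i : ℕ) + 1 = n
      · have hieq : i = (⟨n - 1, by omega⟩ : Fin n) := Fin.ext (by simp; omega)
        rw [if_neg h0, if_pos h1, hieq]
        omega
      · by_cases h2 : (i : ℕ) + 2 = n
        · have hieq : i = (⟨n - 2, by omega⟩ : Fin n) := Fin.ext (by simp; omega)
          rw [if_neg h0, if_neg h1, hieq]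
          omega
        · have hi : 1 ≤ (i : ℕ) ∧ (i : ℕ) + 2 < n := by
            have := i.isLt; omega
          simp [h0, h1, hzero i hi]
end
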